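/- arXiv:2212.03142 — 2 statements merged into one kernel-verified Lean document; each statement's English description precedes it below -/
import Mathlib

section
/- Let w = (1 − √11)/2 (√11 the positive real square root of 11). Then the set of irreducible λ-quiddities over ⟨w⟩ is exactly {(0, kw, 0, −kw) : k ∈ ℤ} ∪ {(kw, 0, −kw, 0) : k ∈ ℤ}. -/
open Matrix Polynomial

noncomputable section

/-- The elementary matrix [[a, -1], [1, 0]]. -/
def matE (a : ℂ) : Matrix (Fin 2) (Fin 2) ℂ := !![a, -1; 1, 0]

/-- M_n(a_1, …, a_n) = matE a_n * matE a_{n-1} * ⋯ * matE a_1, for the list [a_1, …, a_n]. -/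
def Mlist (l : List ℂ) : Matrix (Fin 2) (Fin 2) ℂ := (l.reverse.map matE).prod

/-- A λ-quiddity over R : a nonempty tuple of elements of R with M_n(a_1,…,a_n) = ±Id. -/
def IsQuiddity (R : Set ℂ) (l : List ℂ) : Prop :=
  l ≠ [] ∧ (∀ x ∈ l, x ∈ R) ∧ (Mlist l = 1 ∨ Mlist l = -1)

/-- (a_1,…,a_n) ⊕ (b_1,…,b_m) := (a_1+b_m, a_2,…,a_{n-1}, a_n+b_1, b_2,…,b_{m-1}). -/
def oplus (a b : List ℂ) : List ℂ :=
  (a.headI + b.getLastD 0) ::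
    (a.tail.dropLast ++ (a.getLastD 0 + b.headI) :: b.tail.dropLast)

/-- b is obtained from a by a cyclic permutation of a or of the reversal of a. -/
def CyclicEquiv (a b : List ℂ) : Prop :=
  (∃ k, b = a.rotate k) ∨ (∃ k, b = a.reverse.rotate k)

/-- A λ-quiddity c over R is reducible if c ∼ (a_1,…,a_m) ⊕ (b_1,…,b_l) with
(a_1,…,a_m) a tuple of elements of R, (b_1,…,b_l) a λ-quiddity over R, m ≥ 3 and l ≥ 3. -/
def ReducibleQuiddity (R : Set ℂ) (c : List ℂ) : Prop :=
  ∃ a b : List ℂ, (∀ x ∈ a, x ∈ R) ∧ IsQuiddity R b ∧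
    3 ≤ a.length ∧ 3 ≤ b.length ∧ CyclicEquiv c (oplus a b)

/-- The irreducible λ-quiddities over R : the λ-quiddities of size ≥ 3 which are not
reducible (those of size < 3, i.e. (0,0), are by convention not irreducible). -/
def IrreducibleQuiddity (R : Set ℂ) (c : List ℂ) : Prop :=
  IsQuiddity R c ∧ 3 ≤ c.length ∧ ¬ ReducibleQuiddity R c

/-- The subgroup ⟨w⟩ = {kw : k ∈ ℤ} of (ℂ, +), as a set. -/
def subgroupGen (w : ℂ) : Set ℂ := {x | ∃ k : ℤ, x = (k : ℂ) * w}

end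

/-!
Every λ-quiddity over ⟨w⟩ contains a zero. Indeed, write its entries as kᵢw; the Galois
conjugation √11 ↦ -√11 of ℚ(√11) turns it into a λ-quiddity with entries kᵢw', where
w' = (1 + √11) / 2 > 2, and a product of matrices [[a, -1], [1, 0]] with all |a| ≥ 2 is never ±Id
because the continuants grow strictly.

A zero between x and y can be contracted, (…, x, 0, y, …) ↦ (…, x + y, …), which exhibits a
λ-quiddity of size ≥ 5 as (0, x, 0, -x) ⊕ (the contracted one). So irreducible ones have size 3 or
4. A 3-quiddity has middle entry ±1 ∉ ⟨w⟩, and computing M₄ leaves only the two families of the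
statement: the case M₄ = -Id would force a₁a₂ = 2, impossible as w² = w + 5/2 with w irrational.
-/

section Matrices

variable {R S : Type*} [CommRing R] [CommRing S]

/- `matE` and `Mlist` over an arbitrary commutative ring (over `ℂ` they agree by `rfl`), so that
quiddities can be transported along ring homomorphisms. -/
def elemMat (a : R) : Matrix (Fin 2) (Fin 2) R := !![a, -1; 1, 0]

def listMat (l : List R) : Matrix (Fin 2) (Fin 2) R := (l.reverse.map elemMat).prod

def IsPMOne (M : Matrix (Fin 2) (Fin 2) R) : Prop := M = 1 ∨ M = -1

theorem listMat_append (l₁ l₂ : List R) : listMat (l₁ ++ l₂) = listMat l₂ * listMat l₁ := by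
  simp [listMat]

theorem listMat_cons (a : R) (l : List R) : listMat (a :: l) = listMat l * elemMat a := by
  simp [listMat]

theorem IsPMOne.neg {M : Matrix (Fin 2) (Fin 2) R} (h : IsPMOne M) : IsPMOne (-M) := by
  rcases h with rfl | rfl
  exacts [Or.inr rfl, Or.inl (neg_neg 1)]

theorem IsPMOne.mul_comm {A B : Matrix (Fin 2) (Fin 2) R} (h : IsPMOne (A * B)) :
    IsPMOne (B * A) := by
  rcases h with h | h
  · exact Or.inl (mul_eq_one_comm.mp h)
  · refine Or.inr (neg_eq_iff_eq_neg.mp ?_)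
    rw [← neg_mul]
    exact mul_eq_one_comm.mp (by rw [mul_neg, h, neg_neg])

theorem IsPMOne.listMat_rotate {l : List R} (h : IsPMOne (listMat l)) (k : ℕ) :
    IsPMOne (listMat (l.rotate k)) := by
  rw [← List.take_append_drop (k % l.length) l, listMat_append] at h
  rw [List.rotate_eq_drop_append_take_mod, listMat_append]
  exact h.mul_comm

theorem elemMat_mul_elemMat_zero_mul_elemMat (x y : R) :
    elemMat y * elemMat 0 * elemMat x = -elemMat (x + y) := by
  ext i j
  fin_cases i <;> fin_cases j <;> simp [elemMat, Matrix.mul_apply, Fin.sum_univ_two]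
  ring

theorem listMat_contract_zero (l₁ l₂ : List R) (x y : R) :
    listMat (l₁ ++ x :: 0 :: y :: l₂) = -listMat (l₁ ++ (x + y) :: l₂) := by
  rw [listMat_append, listMat_append, listMat_cons, listMat_cons, listMat_cons, listMat_cons,
    mul_assoc (listMat l₂), mul_assoc (listMat l₂), elemMat_mul_elemMat_zero_mul_elemMat, mul_neg,
    neg_mul]

theorem elemMat_map (f : R →+* S) (a : R) : (elemMat a).map f = elemMat (f a) := by
  ext i j
  fin_cases i <;> fin_cases j <;> simp [elemMat]

theorem RingHom.mapMatrix_listMat (f : R →+* S) (l : List R) :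
    f.mapMatrix (listMat l) = listMat (l.map f) := by
  simp [listMat, map_list_prod, List.map_reverse, List.map_map, Function.comp_def, elemMat_map]

theorem IsPMOne.listMat_map (f : R →+* S) {l : List R} (h : IsPMOne (listMat l)) :
    IsPMOne (listMat (l.map f)) := by
  rw [← RingHom.mapMatrix_listMat]
  rcases h with h | h
  · exact Or.inl (by rw [h, map_one])
  · exact Or.inr (by rw [h, map_neg, map_one])

theorem isPMOne_listMat_map_iff {f : R →+* S} (hf : Function.Injective f) {l : List R} :
    IsPMOne (listMat (l.map f)) ↔ IsPMOne (listMat l) := by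
  refine ⟨fun h => ?_, IsPMOne.listMat_map f⟩
  have hinj : Function.Injective (f.mapMatrix (m := Fin 2)) := fun M N h =>
    Matrix.ext fun i j => hf (congrFun₂ h i j)
  rw [← RingHom.mapMatrix_listMat] at h
  rcases h with h | h
  · exact Or.inl (hinj (by rw [h, map_one]))
  · exact Or.inr (hinj (by rw [h, map_neg, map_one]))

theorem listMat_three_apply_one_one (x y z : R) : listMat [x, y, z] 1 1 = -y := by
  simp [listMat, elemMat, Matrix.mul_apply, Fin.sum_univ_two]

theorem IsPMOne.listMat_three {x y z : R} (h : IsPMOne (listMat [x, y, z])) :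
    y = 1 ∨ y = -1 := by
  have h11 := listMat_three_apply_one_one x y z
  rcases h with h | h <;> rw [h] at h11
  · rw [Matrix.one_apply_eq] at h11
    exact Or.inr (by linear_combination h11)
  · rw [Matrix.neg_apply, Matrix.one_apply_eq, neg_inj] at h11
    exact Or.inl h11.symm

theorem listMat_four (a₁ a₂ a₃ a₄ : R) :
    listMat [a₁, a₂, a₃, a₄] =
      !![a₄ * (a₃ * a₂ * a₁ - a₃ - a₁) - a₂ * a₁ + 1, a₄ * (1 - a₃ * a₂) + a₂;
         a₃ * a₂ * a₁ - a₃ - a₁, 1 - a₃ * a₂] := by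
  ext i j
  fin_cases i <;> fin_cases j <;>
    simp [listMat, elemMat, Matrix.mul_apply, Fin.sum_univ_two] <;> ring

theorem listMat_four_eq_one_iff [NoZeroDivisors R] {a₁ a₂ a₃ a₄ : R} :
    listMat [a₁, a₂, a₃, a₄] = 1 ↔
      (a₁ = 0 ∧ a₃ = 0 ∧ a₄ = -a₂) ∨ (a₂ = 0 ∧ a₄ = 0 ∧ a₃ = -a₁) := by
  rw [listMat_four]
  constructor
  · rw [Matrix.one_fin_two]
    simp only [EmbeddingLike.apply_eq_iff_eq, Matrix.vecCons_inj, and_true]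
    rintro ⟨⟨h00, h01⟩, h10, h11⟩
    have h32 : a₃ * a₂ = 0 := by linear_combination -h11
    have h4 : a₄ = -a₂ := by linear_combination h01 + a₄ * h32
    rcases eq_or_ne a₂ 0 with h2 | h2
    · exact Or.inr ⟨h2, by rw [h4, h2, neg_zero], by linear_combination a₁ * h32 - h10⟩
    · have h1 : a₁ = 0 := (mul_eq_zero.mp (by linear_combination a₄ * h10 - h00)).resolve_left h2
      exact Or.inl ⟨h1, (mul_eq_zero.mp h32).resolve_right h2, h4⟩
  · rintro (⟨rfl, rfl, rfl⟩ | ⟨rfl, rfl, rfl⟩) <;> ext i j <;> fin_cases i <;> fin_cases j <;> simp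

theorem mul_eq_two_of_listMat_four_eq_neg_one {a₁ a₂ a₃ a₄ : R}
    (h : listMat [a₁, a₂, a₃, a₄] = -1) : a₂ * a₁ = 2 := by
  rw [listMat_four, Matrix.one_fin_two] at h
  simp only [Matrix.neg_of, Matrix.neg_cons, Matrix.neg_empty, neg_zero,
    EmbeddingLike.apply_eq_iff_eq, Matrix.vecCons_inj, and_true] at h
  obtain ⟨⟨h00, -⟩, h10, -⟩ := h
  linear_combination a₄ * h10 - h00

theorem elemMat_mul_apply_zero_zero (a : R) (P : Matrix (Fin 2) (Fin 2) R) :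
    (elemMat a * P) 0 0 = a * P 0 0 - P 1 0 := by
  simp [elemMat, Matrix.mul_apply, Fin.sum_univ_two, sub_eq_add_neg]

theorem elemMat_mul_apply_one_zero (a : R) (P : Matrix (Fin 2) (Fin 2) R) :
    (elemMat a * P) 1 0 = P 0 0 := by
  simp [elemMat, Matrix.mul_apply, Fin.sum_univ_two]

end Matrices

section Ordered

variable {K : Type*} [CommRing K] [LinearOrder K] [IsStrictOrderedRing K]

theorem abs_lt_abs_mul_sub {a p q : K} (ha : 2 ≤ |a|) (hqp : |q| < |p|) :
    |p| < |a * p - q| :=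
  calc |p| < 2 * |p| - |q| := by linarith
    _ ≤ |a| * |p| - |q| := by gcongr
    _ = |a * p| - |q| := by rw [abs_mul]
    _ ≤ |a * p - q| := abs_sub_abs_le_abs_sub _ _

theorem abs_prod_elemMat_apply_lt {l : List K} (h : ∀ a ∈ l, 2 ≤ |a|) :
    |(l.map elemMat).prod 1 0| < |(l.map elemMat).prod 0 0| ∧
      1 ≤ |(l.map elemMat).prod 0 0| := by
  induction l with
  | nil => simp
  | cons a t ih =>
    obtain ⟨hlt, hge⟩ := ih fun x hx => h x (List.mem_cons_of_mem a hx)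
    have hstep := abs_lt_abs_mul_sub (h a List.mem_cons_self) hlt
    simp only [List.map_cons, List.prod_cons, elemMat_mul_apply_zero_zero,
      elemMat_mul_apply_one_zero]
    exact ⟨hstep, hge.trans hstep.le⟩

theorem not_isPMOne_listMat {l : List K} (hl : l ≠ []) (h : ∀ a ∈ l, 2 ≤ |a|) :
    ¬ IsPMOne (listMat l) := by
  obtain ⟨a, t, ht⟩ := List.exists_cons_of_ne_nil (List.reverse_ne_nil_iff.mpr hl)
  have hmem : ∀ x ∈ a :: t, 2 ≤ |x| := fun x hx => h x (by rw [← List.mem_reverse, ht]; exact hx)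
  obtain ⟨hlt, hge⟩ := abs_prod_elemMat_apply_lt fun x hx => hmem x (List.mem_cons_of_mem a hx)
  have hgt : 1 < |listMat l 0 0| := by
    rw [listMat, ht, List.map_cons, List.prod_cons, elemMat_mul_apply_zero_zero]
    exact hge.trans_lt (abs_lt_abs_mul_sub (hmem a List.mem_cons_self) hlt)
  rintro (h1 | h1) <;> simp [h1] at hgt

end Ordered

section Reduction

theorem oplus_length {a b : List ℂ} (ha : 2 ≤ a.length) (hb : 2 ≤ b.length) :
    (oplus a b).length = a.length + b.length - 2 := by
  simp only [oplus, List.length_cons, List.length_append, List.length_dropLast, List.length_tail]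
  omega

theorem ReducibleQuiddity.exists_isQuiddity_length_lt {R : Set ℂ} {c : List ℂ}
    (h : ReducibleQuiddity R c) : ∃ b, IsQuiddity R b ∧ 3 ≤ b.length ∧ b.length < c.length := by
  obtain ⟨a, b, -, hb, ha, hb3, hc⟩ := h
  have hlen : c.length = (oplus a b).length := by
    rcases hc with ⟨k, hk⟩ | ⟨k, hk⟩ <;> simp [hk]
  refine ⟨b, hb, hb3, ?_⟩
  rw [hlen, oplus_length (by omega) (by omega)]
  omega

theorem List.exists_rotate_eq_of_mem {α : Type*} {l : List α} {z : α} (hz : z ∈ l)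
    (hl : 5 ≤ l.length) : ∃ k p x y m, l.rotate k = p :: x :: z :: y :: m ∧ m ≠ [] := by
  obtain ⟨s, t, rfl⟩ := List.append_of_mem hz
  have hts : 4 ≤ (t ++ s).length := by
    simp only [List.length_append, List.length_cons] at hl ⊢; omega
  obtain ⟨y, u, hyu⟩ := List.exists_cons_of_length_pos (l := t ++ s) (by omega)
  have hu : 3 ≤ u.length := by
    have := congrArg List.length hyu
    simp only [List.length_append, List.length_cons] at hl this
    omega
  obtain ⟨p, x, hpx⟩ := List.length_eq_two.mp
    (show (u.drop (u.length - 2)).length = 2 by rw [List.length_drop]; omega)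
  refine ⟨s.length + (z :: y :: u.take (u.length - 2)).length, p, x, y, u.take (u.length - 2), ?_,
    List.ne_nil_of_length_pos (by rw [List.length_take]; omega)⟩
  rw [← List.rotate_rotate, List.rotate_append_length_eq, List.cons_append, hyu,
    ← List.take_append_drop (u.length - 2) u, hpx]
  simpa using List.rotate_append_length_eq (z :: y :: u.take (u.length - 2)) [p, x]

theorem IsQuiddity.isPMOne {R : Set ℂ} {c : List ℂ} (h : IsQuiddity R c) :
    IsPMOne (listMat c) :=
  h.2.2

theorem reducibleQuiddity_of_zero_mem (G : AddSubgroup ℂ) {c : List ℂ} (hc : IsQuiddity G c)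
    (h5 : 5 ≤ c.length) (h0 : (0 : ℂ) ∈ c) : ReducibleQuiddity G c := by
  obtain ⟨-, hmem, hpm⟩ := hc
  obtain ⟨k, p, x, y, m, hk, hm⟩ := List.exists_rotate_eq_of_mem h0 h5
  have hmem' : ∀ z ∈ p :: x :: 0 :: y :: m, z ∈ G := fun z hz =>
    hmem z (List.mem_rotate.mp (hk ▸ hz))
  have hb : IsPMOne (listMat ((x + y) :: (m ++ [p]))) := by
    have h := ((IsPMOne.listMat_rotate hpm k).neg)
    rw [hk, ← List.singleton_append, listMat_contract_zero, neg_neg] at h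
    simpa using h.listMat_rotate 1
  refine ⟨[0, x, 0, -x], (x + y) :: (m ++ [p]), ?_, ⟨by simp, ?_, hb⟩, by simp, ?_, ?_⟩
  · have hx := hmem' x (by simp)
    simp only [List.mem_cons, List.not_mem_nil, or_false]
    rintro z (rfl | rfl | rfl | rfl) <;> simp [hx]
  · simp only [List.mem_cons, List.mem_append, List.not_mem_nil, or_false]
    rintro z (rfl | hz | rfl)
    · exact G.add_mem (hmem' x (by simp)) (hmem' y (by simp))
    · exact hmem' z (by simp [hz])
    · exact hmem' z (by simp)
  · simpa [Nat.one_le_iff_ne_zero] using hm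
  · refine Or.inl ⟨k, ?_⟩
    rw [hk]
    simp [oplus, -List.getLastD_eq_getLast?, List.getLastD_cons, List.getLastD_concat,
      List.getLastD_nil]

end Reduction

theorem subgroupGen_eq_zmultiples (w : ℂ) : subgroupGen w = AddSubgroup.zmultiples w := by
  ext x
  simp [subgroupGen, AddSubgroup.mem_zmultiples_iff, eq_comm]

section SqrtEleven

theorem irreducible_X_sq_sub_eleven : Irreducible (X ^ 2 - C (11 : ℚ)) := by
  refine X_pow_sub_C_irreducible_of_prime Nat.prime_two fun b hb => ?_
  have h11 : Irrational √((11 : ℚ) : ℝ) := by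
    simpa using (by norm_num : Nat.Prime 11).irrational_sqrt
  exact (irrational_sqrt_ratCast_iff.mp h11).1 ⟨b, by rw [← hb, sq]⟩

instance : Fact (Irreducible (X ^ 2 - C (11 : ℚ))) := ⟨irreducible_X_sq_sub_eleven⟩

abbrev QSqrt11 : Type := AdjoinRoot (X ^ 2 - C (11 : ℚ))

noncomputable def QSqrt11.lift {F : Type*} [Field F] [CharZero F] (s : F) (hs : s ^ 2 = 11) :
    QSqrt11 →+* F :=
  AdjoinRoot.lift (algebraMap ℚ F) s (by simp [hs])

@[simp]
theorem QSqrt11.lift_root {F : Type*} [Field F] [CharZero F] (s : F) (hs : s ^ 2 = 11) :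
    QSqrt11.lift s hs (AdjoinRoot.root _) = s :=
  AdjoinRoot.lift_root _

theorem irrational_one_sub_sqrt_eleven_div_two : Irrational ((1 - √11) / 2) := by
  simpa using (((by norm_num : Nat.Prime 11).irrational_sqrt.natCast_sub 1).div_natCast
    two_ne_zero)

theorem eq_zero_of_intCast_mul_eq_ratCast {m : ℤ} {q : ℚ} (h : (m : ℝ) * ((1 - √11) / 2) = q) :
    m = 0 := by
  by_contra hm
  exact (irrational_one_sub_sqrt_eleven_div_two.intCast_mul hm).ne_rat q h

variable {w : ℂ}

theorem one_notMem_zmultiples (hw : w = (((1 - Real.sqrt 11) / 2 : ℝ) : ℂ)) :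
    (1 : ℂ) ∉ AddSubgroup.zmultiples w := by
  intro h
  obtain ⟨k, hk⟩ := AddSubgroup.mem_zmultiples_iff.mp h
  have hR : (k : ℝ) * ((1 - √11) / 2) = ((1 : ℚ) : ℝ) := by
    rw [hw, zsmul_eq_mul] at hk
    exact_mod_cast hk
  simp [eq_zero_of_intCast_mul_eq_ratCast hR] at hR

theorem mul_ne_two_of_mem_zmultiples (hw : w = (((1 - Real.sqrt 11) / 2 : ℝ) : ℂ)) {x y : ℂ}
    (hx : x ∈ AddSubgroup.zmultiples w) (hy : y ∈ AddSubgroup.zmultiples w) : x * y ≠ 2 := by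
  obtain ⟨k, rfl⟩ := AddSubgroup.mem_zmultiples_iff.mp hx
  obtain ⟨l, rfl⟩ := AddSubgroup.mem_zmultiples_iff.mp hy
  intro h
  have h' : (k : ℝ) * ((1 - √11) / 2) * (l * ((1 - √11) / 2)) = 2 := by
    rw [hw, zsmul_eq_mul, zsmul_eq_mul] at h
    exact_mod_cast h
  have hR : ((k * l : ℤ) : ℝ) * ((1 - √11) / 2) = ((2 - 5 / 2 * ((k * l : ℤ) : ℚ) : ℚ) : ℝ) := by
    push_cast
    linear_combination h' - (k * l / 4 : ℝ) * Real.sq_sqrt (show (0 : ℝ) ≤ 11 by norm_num)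
  rw [eq_zero_of_intCast_mul_eq_ratCast hR] at hR
  norm_num at hR

theorem isPMOne_listMat_conj (hw : w = (((1 - Real.sqrt 11) / 2 : ℝ) : ℂ)) {ks : List ℤ}
    (h : IsPMOne (listMat (ks.map (· • w)))) :
    IsPMOne (listMat (ks.map fun k : ℤ => (k : ℝ) * ((1 + √11) / 2))) := by
  have hs : (√11 : ℝ) ^ 2 = 11 := Real.sq_sqrt (by norm_num)
  have hsC : ((√11 : ℝ) : ℂ) ^ 2 = 11 := by exact_mod_cast hs
  have hsR : (-√11 : ℝ) ^ 2 = 11 := by rw [neg_sq, hs]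
  set lθ := ks.map fun k : ℤ => (k : QSqrt11) * ((1 - AdjoinRoot.root _) / 2)
  have hC : ks.map (· • w) = lθ.map (QSqrt11.lift _ hsC) := by
    simp [lθ, Function.comp_def, map_ofNat, hw, zsmul_eq_mul]
  have hR : ks.map (fun k : ℤ => (k : ℝ) * ((1 + √11) / 2)) = lθ.map (QSqrt11.lift _ hsR) := by
    simp [lθ, Function.comp_def, map_ofNat]
  rw [hC, isPMOne_listMat_map_iff (QSqrt11.lift _ hsC).injective] at h
  rw [hR]
  exact h.listMat_map _

theorem zero_mem_of_isQuiddity (hw : w = (((1 - Real.sqrt 11) / 2 : ℝ) : ℂ)) {c : List ℂ}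
    (hc : IsQuiddity (AddSubgroup.zmultiples w) c) : (0 : ℂ) ∈ c := by
  obtain ⟨hne, hmem, hpm⟩ := hc
  obtain ⟨ks, rfl⟩ : c ∈ Set.range (List.map (· • w)) := by
    rw [Set.range_list_map]
    exact fun x hx => AddSubgroup.mem_zmultiples_iff.mp (hmem x hx)
  by_contra h0
  refine not_isPMOne_listMat (by simpa using hne) ?_ (isPMOne_listMat_conj hw hpm)
  simp only [List.mem_map]
  rintro _ ⟨k, hk, rfl⟩
  have hk1 : (1 : ℝ) ≤ |(k : ℝ)| := by
    exact_mod_cast Int.one_le_abs fun hk0 => h0 (List.mem_map.mpr ⟨k, hk, by simp [hk0]⟩)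
  have hs : 3 < √11 := (Real.lt_sqrt (by norm_num)).mpr (by norm_num)
  rw [abs_mul, abs_of_pos (by positivity : (0 : ℝ) < (1 + √11) / 2)]
  nlinarith

theorem length_ne_three_of_isQuiddity (hw : w = (((1 - Real.sqrt 11) / 2 : ℝ) : ℂ))
    {c : List ℂ} (hc : IsQuiddity (AddSubgroup.zmultiples w) c) : c.length ≠ 3 := by
  intro h3
  obtain ⟨x, y, z, rfl⟩ := List.length_eq_three.mp h3
  have hy : y ∈ AddSubgroup.zmultiples w := hc.2.1 y (by simp)
  rcases hc.isPMOne.listMat_three with rfl | rfl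
  · exact one_notMem_zmultiples hw hy
  · exact one_notMem_zmultiples hw (by simpa using neg_mem hy)

theorem not_reducibleQuiddity_of_length_eq_four (hw : w = (((1 - Real.sqrt 11) / 2 : ℝ) : ℂ))
    {c : List ℂ} (hc : c.length = 4) : ¬ ReducibleQuiddity (AddSubgroup.zmultiples w) c := by
  intro h
  obtain ⟨b, hb, hb3, hbc⟩ := h.exists_isQuiddity_length_lt
  exact length_ne_three_of_isQuiddity hw hb (by omega)

theorem isQuiddity_four_iff (hw : w = (((1 - Real.sqrt 11) / 2 : ℝ) : ℂ)) {a₁ a₂ a₃ a₄ : ℂ} :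
    IsQuiddity (AddSubgroup.zmultiples w) [a₁, a₂, a₃, a₄] ↔
      (∃ k : ℤ, [a₁, a₂, a₃, a₄] = [0, (k : ℂ) * w, 0, -((k : ℂ) * w)]) ∨
      (∃ k : ℤ, [a₁, a₂, a₃, a₄] = [(k : ℂ) * w, 0, -((k : ℂ) * w), 0]) := by
  constructor
  · rintro ⟨-, hmem, h | h⟩
    · rcases listMat_four_eq_one_iff.mp h with ⟨rfl, rfl, rfl⟩ | ⟨rfl, rfl, rfl⟩
      · obtain ⟨k, rfl⟩ := AddSubgroup.mem_zmultiples_iff.mp (hmem a₂ (by simp))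
        exact Or.inl ⟨k, by simp [zsmul_eq_mul]⟩
      · obtain ⟨k, rfl⟩ := AddSubgroup.mem_zmultiples_iff.mp (hmem a₁ (by simp))
        exact Or.inr ⟨k, by simp [zsmul_eq_mul]⟩
    · exact absurd (mul_eq_two_of_listMat_four_eq_neg_one h)
        (mul_ne_two_of_mem_zmultiples hw (hmem a₂ (by simp)) (hmem a₁ (by simp)))
  · rintro (⟨k, h⟩ | ⟨k, h⟩) <;> rw [h] <;>
      exact ⟨by simp, by simp, Or.inl (listMat_four_eq_one_iff.mpr (by simp))⟩

end SqrtEleven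

theorem stmt8 (w : ℂ) (hw : w = (((1 - Real.sqrt 11) / 2 : ℝ) : ℂ)) :
    {c : List ℂ | IrreducibleQuiddity (subgroupGen w) c} =
      {c : List ℂ | ∃ k : ℤ, c = [0, (k : ℂ) * w, 0, -((k : ℂ) * w)]} ∪
      {c : List ℂ | ∃ k : ℤ, c = [(k : ℂ) * w, 0, -((k : ℂ) * w), 0]} := by
  rw [subgroupGen_eq_zmultiples]
  ext c
  simp only [Set.mem_union]
  constructor
  · rintro ⟨hc, h3, hirr⟩
    have h4 : c.length = 4 := by
      refine le_antisymm (not_lt.mp fun h5 => hirr ?_)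
        (lt_of_le_of_ne h3 (length_ne_three_of_isQuiddity hw hc).symm)
      exact reducibleQuiddity_of_zero_mem _ hc h5 (zero_mem_of_isQuiddity hw hc)
    obtain ⟨a₁, a₂, a₃, a₄, rfl⟩ := List.length_eq_four.mp h4
    exact (isQuiddity_four_iff hw).mp hc
  · rintro (⟨k, rfl⟩ | ⟨k, rfl⟩) <;>
      exact ⟨(isQuiddity_four_iff hw).mpr (by simp), by simp,
        not_reducibleQuiddity_of_length_eq_four hw rfl⟩
end

section
/- (Cuntz–Holm) Let (a_1,…,a_n) be an n-tuple of complex numbers that is a λ-quiddity. Then there exist indices i, j ∈ {1,…,n} with i ≠ j such that |a_i| < 2 and |a_j| < 2. -/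
open Matrix Polynomial

noncomputable section

/-! Since `M_n = ±Id` is preserved by cyclic rotation (it is a conjugation), it suffices to rule
out a λ-quiddity whose entries `a_1, …, a_{n-1}` all have modulus `≥ 2`. For `|a| ≥ 2` the matrix
`[[a, -1], [1, 0]]` maps `(x, y)` with `|y| < |x|` to `(a x - y, x)` with `|x| < |a x - y|`, so the
first column `(x, y)` of `M_{n-1}` has `x ≠ 0`. But `x` is the second entry of the first column of
`M_n`, which is `0` for `M_n = ±Id`. -/

lemma Mlist_append (u v : List ℂ) : Mlist (u ++ v) = Mlist v * Mlist u := by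
  simp [Mlist, List.reverse_append]

lemma Mlist_cons (a : ℂ) (t : List ℂ) : Mlist (a :: t) = Mlist t * matE a := by
  simp [Mlist]

lemma Mlist_append_singleton (t : List ℂ) (b : ℂ) : Mlist (t ++ [b]) = matE b * Mlist t := by
  simp [Mlist]

lemma mul_eq_one_or_neg_one_comm {M : Type*} [Monoid M] [HasDistribNeg M]
    [IsDedekindFiniteMonoid M] {a b : M} (h : a * b = 1 ∨ a * b = -1) :
    b * a = 1 ∨ b * a = -1 := by
  rcases h with h | h
  · exact .inl (mul_eq_one_comm.mp h)
  · right
    have : b * -a = 1 := mul_eq_one_comm.mp (by rw [neg_mul, h, neg_neg])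
    rw [← neg_neg (b * a), ← mul_neg, this]

lemma Mlist_append_comm {u v : List ℂ} (h : Mlist (u ++ v) = 1 ∨ Mlist (u ++ v) = -1) :
    Mlist (v ++ u) = 1 ∨ Mlist (v ++ u) = -1 := by
  rw [Mlist_append] at h ⊢
  exact mul_eq_one_or_neg_one_comm h

lemma matE_mulVec (a : ℂ) (w : Fin 2 → ℂ) : matE a *ᵥ w = ![a * w 0 - w 1, w 0] := by
  ext i
  fin_cases i <;> simp [matE, Matrix.mulVec, dotProduct, Fin.sum_univ_two, sub_eq_add_neg]

lemma norm_matE_mulVec_one_lt {a : ℂ} (ha : 2 ≤ ‖a‖) {w : Fin 2 → ℂ} (hw : ‖w 1‖ < ‖w 0‖) :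
    ‖(matE a *ᵥ w) 1‖ < ‖(matE a *ᵥ w) 0‖ := by
  rw [matE_mulVec]
  simp only [Matrix.cons_val_zero, Matrix.cons_val_one]
  calc ‖w 0‖ < 2 * ‖w 0‖ - ‖w 1‖ := by linarith
    _ ≤ ‖a * w 0‖ - ‖w 1‖ := by
        rw [norm_mul]; gcongr
    _ ≤ ‖a * w 0 - w 1‖ := norm_sub_norm_le _ _

lemma norm_Mlist_mulVec_one_lt {l : List ℂ} (hl : ∀ x ∈ l, 2 ≤ ‖x‖) {w : Fin 2 → ℂ}
    (hw : ‖w 1‖ < ‖w 0‖) : ‖(Mlist l *ᵥ w) 1‖ < ‖(Mlist l *ᵥ w) 0‖ := by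
  induction l generalizing w with
  | nil => simpa [Mlist] using hw
  | cons a t ih =>
    rw [Mlist_cons, ← Matrix.mulVec_mulVec]
    exact ih (fun x hx => hl x (List.mem_cons_of_mem a hx))
      (norm_matE_mulVec_one_lt (hl a List.mem_cons_self) hw)

lemma Mlist_append_singleton_ne {t : List ℂ} (ht : ∀ x ∈ t, 2 ≤ ‖x‖) (b : ℂ) :
    ¬(Mlist (t ++ [b]) = 1 ∨ Mlist (t ++ [b]) = -1) := by
  set v := Mlist t *ᵥ ![1, 0]
  have hv : v 0 ≠ 0 := by
    have := norm_Mlist_mulVec_one_lt ht (w := ![1, 0]) (by simp)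
    exact norm_pos_iff.mp ((norm_nonneg _).trans_lt this)
  have hval : (Mlist (t ++ [b]) *ᵥ ![1, 0]) 1 = v 0 := by
    rw [Mlist_append_singleton, ← Matrix.mulVec_mulVec, matE_mulVec]
    rfl
  rintro (h | h) <;> simp [h] at hval <;> exact hv hval.symm

lemma Mlist_ne_of_two_le_norm_of_ne {l : List ℂ} {i : ℕ} (hi : i < l.length)
    (hl : ∀ (j : ℕ) (hj : j < l.length), j ≠ i → 2 ≤ ‖l[j]‖) :
    ¬(Mlist l = 1 ∨ Mlist l = -1) := by
  have hsplit : l = (l.take i ++ [l[i]]) ++ l.drop (i + 1) := by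
    conv_lhs => rw [← List.take_append_drop i l, ← List.getElem_cons_drop hi]
    simp
  have herase : ∀ x ∈ l.drop (i + 1) ++ l.take i, 2 ≤ ‖x‖ := by
    intro x hx
    have hx' : x ∈ l.eraseIdx i := by
      rw [List.eraseIdx_eq_take_drop_succ, List.mem_append, or_comm]
      exact List.mem_append.mp hx
    obtain ⟨j, hj, hji, rfl⟩ := List.mem_eraseIdx_iff_getElem.mp hx'
    exact hl j hj hji
  rw [hsplit]
  intro h
  have := Mlist_append_comm h
  rw [← List.append_assoc] at this
  exact Mlist_append_singleton_ne herase _ this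

theorem stmt16 (l : List ℂ) (h : IsQuiddity Set.univ l) :
    ∃ i j : Fin l.length, i ≠ j ∧
      ‖l.get i‖ < 2 ∧ ‖l.get j‖ < 2 := by
  obtain ⟨hne, -, hq⟩ := h
  by_contra hcon
  push Not at hcon
  obtain ⟨i, hi⟩ : ∃ i : Fin l.length, ∀ j, j ≠ i → 2 ≤ ‖l.get j‖ := by
    by_cases hsmall : ∃ i : Fin l.length, ‖l.get i‖ < 2
    · obtain ⟨i, hi⟩ := hsmall
      exact ⟨i, fun j hj => hcon i j hj.symm hi⟩
    · push Not at hsmall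
      exact ⟨⟨0, List.length_pos_iff.mpr hne⟩, fun j _ => hsmall j⟩
  exact Mlist_ne_of_two_le_norm_of_ne i.isLt
    (fun j hj hji => hi ⟨j, hj⟩ (fun he => hji (congrArg Fin.val he))) hq
end
end
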